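/- arXiv:2304.03985 — 3 statements merged into one kernel-verified Lean document; each statement's English description precedes it below -/
import Mathlib

section
/- Let T1 and T2 be full skew trees with n internal nodes each, with tree permutations σ and τ respectively. Then the rotation distance d(T1, T2) = 1 if and only if σ ∼ τ (τ is obtained from σ by a skew transposition). -/
/-- Full binary trees: every node is a leaf or has exactly two children.
`node l r` is an internal node with left subtree `l` and right subtree `r`. -/
inductive FBT : Type
  | leaf : FBT
  | node : FBT → FBT → FBT
  deriving DecidableEq

namespace FBT

/-- Number of internal nodes. -/
def internal : FBT → ℕ
  | leaf => 0
  | node l r => internal l + internal r + 1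

/-- Height: maximum number of internal nodes on a root-to-leaf path. -/
def height : FBT → ℕ
  | leaf => 0
  | node l r => max (height l) (height r) + 1

/-- Rank of a full binary tree (Ehrenfeucht–Haussler rank). -/
def rank : FBT → ℕ
  | leaf => 0
  | node l r => if rank l = rank r then rank l + 1 else max (rank l) (rank r)

/-- A full binary tree is skew if every internal node has at least one leaf child. -/
def skew : FBT → Prop
  | leaf => True
  | node l r => (l = leaf ∨ r = leaf) ∧ skew l ∧ skew r

/-- Pre-order traversal of the internal nodes, labeled by the in-order labeling
(1-indexed); `off` is the number of in-order labels used strictly to the left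
of this subtree.  `T.preorderAux 0` is the tree permutation of `T`, as a list. -/
def preorderAux : FBT → ℕ → List ℕ
  | leaf, _ => []
  | node l r, off =>
      (off + internal l + 1) :: (preorderAux l off ++ preorderAux r (off + internal l + 1))

/-- Number of internal nodes on the rightmost root-to-leaf path. -/
def rightPath : FBT → ℕ
  | leaf => 0
  | node _ r => rightPath r + 1

end FBT

/-- One (left or right) rotation, performed at some node of the tree. -/
inductive Rot : FBT → FBT → Prop
  | rotR (C D E : FBT) : Rot (FBT.node (FBT.node C D) E) (FBT.node C (FBT.node D E))
  | rotL (C D E : FBT) : Rot (FBT.node C (FBT.node D E)) (FBT.node (FBT.node C D) E)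
  | congrL {l l' : FBT} (r : FBT) : Rot l l' → Rot (FBT.node l r) (FBT.node l' r)
  | congrR {r r' : FBT} (l : FBT) : Rot r r' → Rot (FBT.node l r) (FBT.node l r')

/-- `RotChainP P k T1 T2`: there is a sequence of `k` rotations transforming `T1`
into `T2` in which every tree reached along the way satisfies `P`. -/
def RotChainP (P : FBT → Prop) : ℕ → FBT → FBT → Prop
  | 0, T1, T2 => T1 = T2
  | k+1, T1, T2 => ∃ T, Rot T1 T ∧ P T ∧ RotChainP P k T T2

/-- `RotChain k T1 T2`: `T1` can be transformed into `T2` by `k` rotations. -/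
def RotChain : ℕ → FBT → FBT → Prop := RotChainP fun _ => True

/-- The rotation distance between two full binary trees. -/
noncomputable def rotDist (T1 T2 : FBT) : ℕ := sInf {k | RotChain k T1 T2}

/-- The right comb on `n` internal nodes. -/
def rightComb : ℕ → FBT
  | 0 => FBT.leaf
  | n+1 => FBT.node FBT.leaf (rightComb n)

/-- The left comb on `n` internal nodes. -/
def leftComb : ℕ → FBT
  | 0 => FBT.leaf
  | n+1 => FBT.node (leftComb n) FBT.leaf

/-- The complete binary tree of height `r`. -/
def completeTree : ℕ → FBT
  | 0 => FBT.leaf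
  | r+1 => FBT.node (completeTree r) (completeTree r)

/-- Replace the leftmost leaf of the first tree by the second tree. -/
def attachLeftmost : FBT → FBT → FBT
  | FBT.leaf, S => S
  | FBT.node l r, S => FBT.node (attachLeftmost l S) r

/-- The transposition `δ_{i,j,k}` (1-indexed, `1 ≤ i < j < k`) applied to a list:
the consecutive blocks occupying positions `i..j-1` and `j..k-1` are swapped,
all other positions are left fixed. -/
def transposeList (i j k : ℕ) (l : List ℕ) : List ℕ :=
  l.take (i-1) ++ (l.drop (j-1)).take (k-j) ++ (l.drop (i-1)).take (j-i) ++ l.drop (k-1)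

/-- `δ_{i,j,k}` is a tree transposition (on permutations of `n` elements): there are
full binary trees `T1, T2` with `n` internal nodes each, at rotation distance `1`,
whose tree permutations `σ, τ` satisfy `δ_{i,j,k}(σ) = τ`. -/
def IsTreeTransposition (n i j k : ℕ) : Prop :=
  ∃ T1 T2 : FBT, T1.internal = n ∧ T2.internal = n ∧ rotDist T1 T2 = 1 ∧
    transposeList i j k (T1.preorderAux 0) = T2.preorderAux 0

/-- `σ` (a permutation of `Fin n`) is a tree permutation: the pre-order traversal of
some full binary tree with `n` internal nodes under the in-order labeling.
(Positions and values are converted to 1-indexed labels.) -/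
def IsTreePerm (n : ℕ) (σ : Equiv.Perm (Fin n)) : Prop :=
  ∃ T : FBT, T.internal = n ∧ T.preorderAux 0 = List.ofFn fun i => (σ i : ℕ) + 1

/-- `σ` is a skew permutation: the tree permutation of some full skew tree. -/
def IsSkewPerm (n : ℕ) (σ : Equiv.Perm (Fin n)) : Prop :=
  ∃ T : FBT, T.internal = n ∧ T.skew ∧ T.preorderAux 0 = List.ofFn fun i => (σ i : ℕ) + 1

/-- `SkewSim σ τ` (written `σ ∼ τ` in the paper): `τ` is obtained from `σ` (lists,
0-indexed) by a skew transposition: for some position `i`, `σ(i)` and `σ(i+1)` are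
respectively the min and the max (or the max and the min) of the suffix starting at
position `i`, and `τ` is `σ` with the entries at positions `i` and `i+1` swapped. -/
def SkewSim (σ τ : List ℕ) : Prop :=
  ∃ i : ℕ, i + 1 < σ.length ∧
    (((∀ x ∈ σ.drop i, σ.getD i 0 ≤ x) ∧ (∀ x ∈ σ.drop i, x ≤ σ.getD (i+1) 0)) ∨
     ((∀ x ∈ σ.drop i, x ≤ σ.getD i 0) ∧ (∀ x ∈ σ.drop i, σ.getD (i+1) 0 ≤ x))) ∧
    τ = σ.take i ++ [σ.getD (i+1) 0, σ.getD i 0] ++ σ.drop (i+2)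

/-- The tree polynomial of a full binary tree: the sum over all leaves of `x^a y^b`,
where `a` (resp. `b`) is the number of left (resp. right) edges on the root-to-leaf
path.  `X 0` plays the role of `x` and `X 1` the role of `y`. -/
noncomputable def treePoly : FBT → MvPolynomial (Fin 2) ℕ
  | FBT.leaf => 1
  | FBT.node l r => MvPolynomial.X 0 * treePoly l + MvPolynomial.X 1 * treePoly r

/-! In a skew tree every internal node has a leaf child, so the preorder is the root label followed
by the preorder of the one non-trivial subtree, and the root label is the minimum or the maximum of
the labels of its subtree. A rotation between two skew trees is therefore local to a subtree of the
shape `node leaf (node D leaf)` or `node (node leaf D) leaf`, and it swaps the first two entries of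
that subtree's preorder, which are its minimum and maximum labels. Conversely, in any tree a
preorder beginning with the minimum and maximum labels (in either order) forces this shape, and a
tree is determined by its preorder. Since a rotation never fixes a tree,
distance one means a single rotation. -/

theorem Nat.sInf_eq_one_iff {s : Set ℕ} : sInf s = 1 ↔ 1 ∈ s ∧ 0 ∉ s := by
  constructor
  · intro h
    have hne : s.Nonempty := Nat.nonempty_of_pos_sInf (by omega)
    exact ⟨h ▸ Nat.sInf_mem hne, fun h0 => by simp [Nat.sInf_eq_zero.2 (Or.inl h0)] at h⟩
  · rintro ⟨h1, h0⟩
    refine le_antisymm (Nat.sInf_le h1) (Nat.one_le_iff_ne_zero.2 fun h => ?_)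
    rcases Nat.sInf_eq_zero.1 h with h | h
    · exact h0 h
    · simp [h] at h1

namespace FBT

theorem internal_eq_zero_iff {T : FBT} : T.internal = 0 ↔ T = leaf := by
  cases T <;> simp [internal]

theorem length_preorderAux (T : FBT) (off : ℕ) : (T.preorderAux off).length = T.internal := by
  induction T generalizing off with
  | leaf => rfl
  | node l r ihl ihr => simp [preorderAux, internal, ihl, ihr]

theorem mem_preorderAux {T : FBT} {off x : ℕ} :
    x ∈ T.preorderAux off ↔ off < x ∧ x ≤ off + T.internal := by
  induction T generalizing off with
  | leaf => simp [preorderAux, internal]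
  | node l r ihl ihr =>
    simp only [preorderAux, internal, List.mem_cons, List.mem_append, ihl, ihr]
    omega

theorem eq_of_preorderAux_eq {T T' : FBT} {off : ℕ}
    (h : T.preorderAux off = T'.preorderAux off) : T = T' := by
  induction T generalizing T' off with
  | leaf => cases T' <;> simp_all [preorderAux]
  | node l r ihl ihr =>
    cases T' with
    | leaf => simp [preorderAux] at h
    | node l' r' =>
      simp only [preorderAux, List.cons.injEq] at h
      obtain ⟨hhead, htail⟩ := h
      have hl : l.internal = l'.internal := by omega
      rw [hl] at htail
      obtain ⟨hpl, hpr⟩ := List.append_inj htail (by simp [length_preorderAux, hl])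
      rw [ihl hpl, ihr hpr]

theorem exists_eq_leaf_node_of_preorderAux {T : FBT} {off : ℕ} {τ : List ℕ}
    (h : T.preorderAux off = (off + 1) :: τ) :
    ∃ R, T = node leaf R ∧ R.preorderAux (off + 1) = τ := by
  cases T with
  | leaf => simp [preorderAux] at h
  | node l r =>
    simp only [preorderAux, List.cons.injEq] at h
    obtain rfl : l = leaf := internal_eq_zero_iff.1 (by omega)
    exact ⟨r, rfl, by simpa [preorderAux, internal] using h.2⟩

theorem exists_eq_node_leaf_of_preorderAux {T : FBT} {off : ℕ} {τ : List ℕ}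
    (h : T.preorderAux off = (off + T.internal) :: τ) :
    ∃ L, T = node L leaf ∧ L.preorderAux off = τ := by
  cases T with
  | leaf => simp [preorderAux] at h
  | node l r =>
    simp only [preorderAux, internal, List.cons.injEq] at h
    obtain rfl : r = leaf := internal_eq_zero_iff.1 (by omega)
    exact ⟨l, rfl, by simpa [preorderAux] using h.2⟩

end FBT

open FBT

theorem Rot.internal_eq {T T' : FBT} (h : Rot T T') : T'.internal = T.internal := by
  induction h <;> simp_all [internal] <;> omega

theorem Rot.ne_leaf {T T' : FBT} (h : Rot T T') : T ≠ leaf := by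
  cases h <;> simp

theorem Rot.ne {T T' : FBT} (h : Rot T T') : T ≠ T' := by
  induction h with
  | rotR C D E | rotL C D E =>
    intro h
    have := congrArg internal (FBT.node.inj h).1
    simp only [internal] at this
    omega
  | congrL r _ ih => simpa using ih
  | congrR l _ ih => simpa using ih

theorem rotDist_eq_one_iff {T1 T2 : FBT} : rotDist T1 T2 = 1 ↔ Rot T1 T2 := by
  rw [rotDist, Nat.sInf_eq_one_iff]
  simp only [Set.mem_ofPred_eq, RotChain, RotChainP, true_and, exists_eq_right]
  exact ⟨And.left, fun h => ⟨h, h.ne⟩⟩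

theorem skewSim_cons_iff {x : ℕ} {σ τ : List ℕ} :
    SkewSim (x :: σ) τ ↔
      (∃ y rest, σ = y :: rest ∧ τ = y :: x :: rest ∧
        (((∀ z ∈ x :: σ, x ≤ z) ∧ ∀ z ∈ x :: σ, z ≤ y) ∨
          ((∀ z ∈ x :: σ, z ≤ x) ∧ ∀ z ∈ x :: σ, y ≤ z))) ∨
      ∃ τ', τ = x :: τ' ∧ SkewSim σ τ' := by
  constructor
  · rintro ⟨_ | i, hi, hc, rfl⟩
    · obtain ⟨y, rest, rfl⟩ : ∃ y rest, σ = y :: rest :=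
        List.exists_cons_of_length_pos (by simpa using hi)
      exact Or.inl ⟨y, rest, rfl, by simp, by simpa using hc⟩
    · exact Or.inr ⟨_, rfl, i, by simpa using hi, by simpa using hc, rfl⟩
  · rintro (⟨y, rest, rfl, rfl, hc⟩ | ⟨τ', rfl, i, hi, hc, rfl⟩)
    · exact ⟨0, by simp, by simpa using hc, by simp⟩
    · exact ⟨i + 1, by simpa using hi, by simpa using hc, by simp⟩

theorem Rot.skewSim_preorderAux {T T' : FBT} (h : Rot T T') (hs : T.skew) (hs' : T'.skew)
    (off : ℕ) : SkewSim (T.preorderAux off) (T'.preorderAux off) := by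
  induction h generalizing off with
  | rotR C D E =>
    obtain ⟨rfl, rfl⟩ : C = leaf ∧ E = leaf := by simp_all [skew]
    simp only [preorderAux, internal, List.nil_append, List.append_nil, Nat.add_zero,
      Nat.zero_add, skewSim_cons_iff]
    refine Or.inl ⟨_, _, rfl, by simp +arith, Or.inr ?_⟩
    simp only [List.forall_mem_cons, mem_preorderAux]
    exact ⟨⟨le_rfl, by omega, fun z hz => by omega⟩, by omega, le_rfl, fun z hz => by omega⟩
  | rotL C D E =>
    obtain ⟨rfl, rfl⟩ : C = leaf ∧ E = leaf := by simp_all [skew]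
    simp only [preorderAux, internal, List.nil_append, List.append_nil, Nat.add_zero,
      Nat.zero_add, skewSim_cons_iff]
    refine Or.inl ⟨_, _, rfl, by simp +arith, Or.inl ?_⟩
    simp only [List.forall_mem_cons, mem_preorderAux]
    exact ⟨⟨le_rfl, by omega, fun z hz => by omega⟩, by omega, le_rfl, fun z hz => by omega⟩
  | congrL r h ih =>
    obtain rfl : r = leaf := hs.1.resolve_left h.ne_leaf
    simp only [preorderAux, List.append_nil, h.internal_eq, skewSim_cons_iff]
    exact Or.inr ⟨_, rfl, ih hs.2.1 hs'.2.1 off⟩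
  | congrR l h ih =>
    obtain rfl : l = leaf := hs.1.resolve_right h.ne_leaf
    simp only [preorderAux, List.nil_append, skewSim_cons_iff]
    exact Or.inr ⟨_, rfl, ih hs.2.2 hs'.2.2 _⟩

theorem exists_rot_of_swap {T : FBT} {off x y : ℕ} {rest : List ℕ}
    (hpre : T.preorderAux off = x :: y :: rest)
    (hc : ((∀ z ∈ T.preorderAux off, x ≤ z) ∧ ∀ z ∈ T.preorderAux off, z ≤ y) ∨
      ((∀ z ∈ T.preorderAux off, z ≤ x) ∧ ∀ z ∈ T.preorderAux off, y ≤ z)) :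
    ∃ T', Rot T T' ∧ T'.preorderAux off = y :: x :: rest := by
  have hx : off < x ∧ x ≤ off + T.internal := mem_preorderAux.1 (by simp [hpre])
  have hy : off < y ∧ y ≤ off + T.internal := mem_preorderAux.1 (by simp [hpre])
  have hmin : off + 1 ∈ T.preorderAux off := mem_preorderAux.2 ⟨by omega, by omega⟩
  have hmax : off + T.internal ∈ T.preorderAux off := mem_preorderAux.2 ⟨by omega, le_rfl⟩
  have hxy : (x = off + 1 ∧ y = off + T.internal) ∨ (x = off + T.internal ∧ y = off + 1) := by
    rcases hc with ⟨hcx, hcy⟩ | ⟨hcx, hcy⟩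
    · have := hcx _ hmin
      have := hcy _ hmax
      omega
    · have := hcx _ hmax
      have := hcy _ hmin
      omega
  rcases hxy with ⟨rfl, rfl⟩ | ⟨rfl, rfl⟩
  · obtain ⟨R, rfl, hR⟩ := exists_eq_leaf_node_of_preorderAux hpre
    have hR' : R.preorderAux (off + 1) = (off + 1 + R.internal) :: rest := by
      rw [hR]; simp +arith [internal]
    obtain ⟨D, rfl, hD⟩ := exists_eq_node_leaf_of_preorderAux hR'
    exact ⟨node (node leaf D) leaf, Rot.rotL _ _ _, by simp +arith [preorderAux, internal, hD]⟩
  · obtain ⟨L, rfl, hL⟩ := exists_eq_node_leaf_of_preorderAux hpre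
    obtain ⟨D, rfl, hD⟩ := exists_eq_leaf_node_of_preorderAux hL
    exact ⟨node leaf (node D leaf), Rot.rotR _ _ _, by simp +arith [preorderAux, internal, hD]⟩

theorem exists_rot_of_skewSim {T : FBT} (hs : T.skew) {off : ℕ} {τ : List ℕ}
    (h : SkewSim (T.preorderAux off) τ) : ∃ T', Rot T T' ∧ T'.preorderAux off = τ := by
  induction T generalizing off τ with
  | leaf =>
    obtain ⟨i, hi, -⟩ := h
    simp [preorderAux] at hi
  | node l r ihl ihr =>
    rcases skewSim_cons_iff.1 h with ⟨y, rest, hσ, rfl, hc⟩ | ⟨τ', rfl, htail⟩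
    · exact exists_rot_of_swap (by rw [preorderAux, hσ]) hc
    · obtain ⟨rfl | rfl, hl, hr⟩ := hs
      · obtain ⟨R, hrot, hR⟩ := ihr hr (by simpa [preorderAux, internal] using htail)
        exact ⟨node leaf R, Rot.congrR _ hrot, by simp [preorderAux, internal, hR]⟩
      · obtain ⟨L, hrot, hL⟩ := ihl hl (by simpa [preorderAux] using htail)
        exact ⟨node L leaf, Rot.congrL _ hrot, by simp [preorderAux, hrot.internal_eq, hL]⟩

theorem skew_rotation_iff_skew_transposition_general (T1 T2 : FBT)
    (hs1 : T1.skew) (hs2 : T2.skew) :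
    rotDist T1 T2 = 1 ↔ SkewSim (T1.preorderAux 0) (T2.preorderAux 0) := by
  rw [rotDist_eq_one_iff]
  refine ⟨fun h => h.skewSim_preorderAux hs1 hs2 0, fun h => ?_⟩
  obtain ⟨T, hrot, hT⟩ := exists_rot_of_skewSim hs1 h
  rwa [eq_of_preorderAux_eq hT] at hrot

/-- for full skew trees `T1` and `T2` with `n` internal nodes each,
with tree permutations `σ` and `τ`, `d(T1,T2) = 1` iff `σ ∼ τ` (a skew
transposition). -/
theorem skew_rotation_iff_skew_transposition (n : ℕ) (T1 T2 : FBT)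
    (h1 : T1.internal = n) (h2 : T2.internal = n)
    (hs1 : T1.skew) (hs2 : T2.skew) :
    rotDist T1 T2 = 1 ↔ SkewSim (T1.preorderAux 0) (T2.preorderAux 0) :=
  skew_rotation_iff_skew_transposition_general T1 T2 hs1 hs2
end

section
/- For any two full binary trees T1 and T2 on n internal nodes each, of ranks r1 and r2 respectively, the rank-bounded rotation distance satisfies d_R(T1, T2) ≤ n²(1 + (2n+1)(r1 + r2 − 2)). -/
/-!
Every tree can be flattened to the right comb with at most `n choose 2` rotations without ever
exceeding its own rank: flatten the right subtree, then the left one, and finally merge the two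
combs by rotating the left comb's nodes one at a time onto the right spine. Rank is monotone in
both subtrees and a comb has rank at most one, so no intermediate tree has larger rank than the
tree we started from. Going from `T1` to the comb and back to `T2` takes at most
`n (n - 1) ≤ n²` rotations, within rank `max r1 r2`.
-/

theorem Nat.choose_two_add_choose_two_add_le (a b : ℕ) :
    a.choose 2 + b.choose 2 + a ≤ (a + b + 1).choose 2 := by
  have key : ((a.choose 2 + b.choose 2 + a : ℕ) : ℚ) ≤ ((a + b + 1).choose 2 : ℕ) := by
    push_cast [Nat.cast_choose_two]
    nlinarith [(a.cast_nonneg : (0 : ℚ) ≤ a), (b.cast_nonneg : (0 : ℚ) ≤ b)]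
  exact_mod_cast key

theorem Nat.two_mul_choose_two_le_sq (n : ℕ) : 2 * n.choose 2 ≤ n ^ 2 := by
  have key : ((2 * n.choose 2 : ℕ) : ℚ) ≤ ((n ^ 2 : ℕ) : ℚ) := by
    push_cast [Nat.cast_choose_two]
    nlinarith [(n.cast_nonneg : (0 : ℚ) ≤ n)]
  exact_mod_cast key

namespace Rot

theorem symm {a b : FBT} (h : Rot a b) : Rot b a := by
  induction h with
  | rotR C D E => exact rotL C D E
  | rotL C D E => exact rotR C D E
  | congrL r _ ih => exact congrL r ih
  | congrR l _ ih => exact congrR l ih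

end Rot

namespace RotChainP

variable {P Q : FBT → Prop}

theorem trans {k m : ℕ} {a b c : FBT} (hab : RotChainP P k a b) (hbc : RotChainP P m b c) :
    RotChainP P (k + m) a c := by
  induction k generalizing a with
  | zero => subst hab; simpa using hbc
  | succ k ih =>
    obtain ⟨t, hat, ht, htb⟩ := hab
    rw [Nat.add_right_comm]
    exact ⟨t, hat, ht, ih htb⟩

theorem snoc {k : ℕ} {a b c : FBT} (hab : RotChainP P k a b) (hbc : Rot b c) (hc : P c) :
    RotChainP P (k + 1) a c :=
  hab.trans ⟨c, hbc, hc, rfl⟩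

theorem symm {k : ℕ} {a b : FBT} (hab : RotChainP P k a b) (ha : P a) : RotChainP P k b a := by
  induction k generalizing a with
  | zero => exact Eq.symm hab
  | succ k ih =>
    obtain ⟨t, hat, ht, htb⟩ := hab
    exact (ih htb ht).snoc hat.symm ha

theorem mono (hPQ : ∀ x, P x → Q x) {k : ℕ} {a b : FBT} (hab : RotChainP P k a b) :
    RotChainP Q k a b := by
  induction k generalizing a with
  | zero => exact hab
  | succ k ih =>
    obtain ⟨t, hat, ht, htb⟩ := hab
    exact ⟨t, hat, hPQ t ht, ih htb⟩

theorem node_left (r : FBT) (hPQ : ∀ x, P x → Q (.node x r)) {k : ℕ} {l l' : FBT}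
    (h : RotChainP P k l l') : RotChainP Q k (.node l r) (.node l' r) := by
  induction k generalizing l with
  | zero => exact congrArg (FBT.node · r) h
  | succ k ih =>
    obtain ⟨t, hlt, ht, htl⟩ := h
    exact ⟨.node t r, .congrL r hlt, hPQ t ht, ih htl⟩

theorem node_right (l : FBT) (hPQ : ∀ x, P x → Q (.node l x)) {k : ℕ} {r r' : FBT}
    (h : RotChainP P k r r') : RotChainP Q k (.node l r) (.node l r') := by
  induction k generalizing r with
  | zero => exact congrArg (FBT.node l) h
  | succ k ih =>
    obtain ⟨t, hrt, ht, htr⟩ := h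
    exact ⟨.node l t, .congrR l hrt, hPQ t ht, ih htr⟩

end RotChainP

namespace FBT

theorem rank_node_mono {l l' r r' : FBT} (hl : l.rank ≤ l'.rank) (hr : r.rank ≤ r'.rank) :
    (node l r).rank ≤ (node l' r').rank := by
  simp only [rank]
  split_ifs <;> omega

theorem rank_le_rank_node_right (l r : FBT) : r.rank ≤ (node l r).rank := by
  simp only [rank]
  split_ifs <;> omega

theorem one_le_rank_node (l r : FBT) : 1 ≤ (node l r).rank := by
  simp only [rank]
  split_ifs <;> omega

theorem rank_node_leaf_le (r : FBT) : (node leaf r).rank ≤ max 1 r.rank := by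
  show (if 0 = r.rank then 0 + 1 else max 0 r.rank) ≤ _
  split_ifs <;> omega

end FBT

open FBT

theorem rank_rightComb_le_one (n : ℕ) : (rightComb n).rank ≤ 1 := by
  cases n with
  | zero => exact Nat.zero_le 1
  | succ n =>
    exact (rank_node_leaf_le (rightComb n)).trans (max_le le_rfl (rank_rightComb_le_one n))

theorem rank_rightComb_internal_le (T : FBT) : (rightComb T.internal).rank ≤ T.rank := by
  cases T with
  | leaf => exact le_rfl
  | node l r => exact (rank_rightComb_le_one _).trans (one_le_rank_node l r)

/-- Each rotation at the root moves the top node of the left comb onto the right spine. -/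
theorem rotChainP_node_rightComb {c : ℕ} (a b : ℕ)
    (hc : (node (rightComb a) (rightComb b)).rank ≤ c) :
    RotChainP (·.rank ≤ c) a (node (rightComb a) (rightComb b)) (rightComb (a + b + 1)) := by
  induction a with
  | zero => show node leaf (rightComb b) = rightComb (0 + b + 1); simp [rightComb]
  | succ a ih =>
    have hc₁ : 1 ≤ c := (one_le_rank_node _ _).trans hc
    have hab : (node (rightComb a) (rightComb b)).rank ≤ c :=
      (rank_node_mono (rank_le_rank_node_right leaf _) le_rfl).trans hc
    refine ⟨node leaf (node (rightComb a) (rightComb b)), .rotR _ _ _, ?_, ?_⟩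
    · exact (rank_node_leaf_le _).trans (max_le hc₁ hab)
    · rw [Nat.add_right_comm a 1 b]
      exact (ih hab).node_right leaf fun x hx => (rank_node_leaf_le x).trans (max_le hc₁ hx)

theorem exists_rotChainP_rightComb (T : FBT) :
    ∃ k ≤ T.internal.choose 2, RotChainP (·.rank ≤ T.rank) k T (rightComb T.internal) := by
  induction T with
  | leaf => exact ⟨0, Nat.zero_le _, rfl⟩
  | node L R ihL ihR =>
    obtain ⟨kL, hkL, chL⟩ := ihL
    obtain ⟨kR, hkR, chR⟩ := ihR
    have flattenR : RotChainP (·.rank ≤ (node L R).rank) kR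
        (node L R) (node L (rightComb R.internal)) :=
      chR.node_right L fun x hx => rank_node_mono le_rfl hx
    have flattenL : RotChainP (·.rank ≤ (node L R).rank) kL
        (node L (rightComb R.internal)) (node (rightComb L.internal) (rightComb R.internal)) :=
      chL.node_left _ fun x hx => rank_node_mono hx (rank_rightComb_internal_le R)
    have merge := rotChainP_node_rightComb L.internal R.internal
      (rank_node_mono (rank_rightComb_internal_le L) (rank_rightComb_internal_le R))
    refine ⟨kR + (kL + L.internal), ?_, flattenR.trans (flattenL.trans merge)⟩
    have := Nat.choose_two_add_choose_two_add_le L.internal R.internal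
    simp only [internal]
    omega

/-- for full binary trees `T1`, `T2` on `n` internal nodes each, of ranks
`r1` and `r2`, the rank-bounded rotation distance satisfies
`d_R(T1,T2) ≤ n²(1 + (2n+1)(r1+r2-2))`. -/
theorem rank_bounded_rotation_distance_bound (n r1 r2 : ℕ) (T1 T2 : FBT)
    (h1 : T1.internal = n) (h2 : T2.internal = n)
    (hr1 : T1.rank = r1) (hr2 : T2.rank = r2) :
    ∃ k ≤ n ^ 2 * (1 + (2 * n + 1) * (r1 + r2 - 2)),
      RotChainP (fun S => S.rank ≤ max r1 r2) k T1 T2 := by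
  subst h1 hr1 hr2
  obtain ⟨k₁, hk₁, c₁⟩ := exists_rotChainP_rightComb T1
  obtain ⟨k₂, hk₂, c₂⟩ := exists_rotChainP_rightComb T2
  rw [h2] at hk₂ c₂
  refine ⟨k₁ + k₂, ?_, (c₁.mono fun _ h => h.trans (le_max_left _ _)).trans
    ((c₂.symm le_rfl).mono fun _ h => h.trans (le_max_right _ _))⟩
  have hsq := Nat.two_mul_choose_two_le_sq T1.internal
  have : T1.internal ^ 2 ≤
      T1.internal ^ 2 * (1 + (2 * T1.internal + 1) * (T1.rank + T2.rank - 2)) :=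
    Nat.le_mul_of_pos_right _ (by omega)
  omega
end

section
/- Let T1 and T2 be full binary trees with n internal nodes each, let r = ⌈log₂ n⌉ + 1, let T_B be the complete binary tree of height r, and for i ∈ {1,2} let T_i' be the tree obtained from T_B by replacing its leftmost leaf with the tree T_i. Then rank(T_1') = rank(T_2') = r, and for every k ∈ ℕ, d(T1, T2) ≤ k if and only if d_R(T_1', T_2') ≤ k. -/
/-
Grafting a tree with `n` internal nodes onto the leftmost leaf of the complete tree of
height `r = ⌈log₂ n⌉ + 1` gives a tree of rank `max r (rank T) = r`, because a tree with
`n` internal nodes has rank at most `log₂ (n + 1)`. So a rotation sequence from `T₁` to `T₂`,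
performed inside the grafted copy, stays at rank `r`. Conversely, deleting the rightmost leaf
(with its parent) turns every rotation into a rotation or the identity, and deleting the
`2 ^ r - 1` rightmost leaves of a grafted tree gives back the grafted subtree: any rotation
sequence between `T₁'` and `T₂'` projects to one between `T₁` and `T₂` that is no longer.
-/

open FBT Relation

namespace FBT

lemma two_pow_rank_le_internal_add_one (T : FBT) : 2 ^ T.rank ≤ T.internal + 1 := by
  induction T with
  | leaf => simp [rank, internal]
  | node l r ihl ihr =>
    simp only [rank, internal]
    split_ifs with h
    · rw [h] at ihl
      rw [h, pow_succ]
      omega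
    · rcases max_cases l.rank r.rank with ⟨hm, _⟩ | ⟨hm, _⟩ <;> rw [hm] <;> omega

lemma rank_le_of_internal_le_two_pow {T : FBT} {k : ℕ} (h : T.internal ≤ 2 ^ k) :
    T.rank ≤ k + 1 := by
  have hpow : 2 ^ T.rank ≤ 2 ^ (k + 1) := by
    have := T.two_pow_rank_le_internal_add_one
    have := Nat.one_le_two_pow (n := k)
    rw [pow_succ]
    omega
  exact (Nat.pow_le_pow_iff_right one_lt_two).mp hpow

lemma eq_leaf_of_internal_eq_zero {T : FBT} (h : T.internal = 0) : T = leaf := by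
  cases T with
  | leaf => rfl
  | node l r => simp [internal] at h

def removeRightmostLeaf : FBT → FBT
  | leaf => leaf
  | node l leaf => l
  | node l (node a b) => node l (removeRightmostLeaf (node a b))

lemma internal_removeRightmostLeaf_add_one {T : FBT} (hT : T ≠ leaf) :
    T.removeRightmostLeaf.internal + 1 = T.internal := by
  induction T with
  | leaf => exact absurd rfl hT
  | node l r _ ihr =>
    cases r with
    | leaf => simp [removeRightmostLeaf, internal]
    | node a b =>
      have := ihr (by simp)
      simp only [removeRightmostLeaf, internal] at this ⊢
      omega

end FBT

lemma rank_completeTree (k : ℕ) : (completeTree k).rank = k := by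
  induction k with
  | zero => rfl
  | succ k ih => simp [completeTree, rank, ih]

lemma rank_attachLeftmost_completeTree (m : ℕ) (T : FBT) :
    (attachLeftmost (completeTree m) T).rank = max m T.rank := by
  induction m with
  | zero => simp [completeTree, attachLeftmost]
  | succ m ih =>
    simp only [completeTree, attachLeftmost, rank, ih, rank_completeTree]
    split_ifs with h <;> omega

lemma removeRightmostLeaf_attachLeftmost {C : FBT} (hC : C ≠ leaf) (T : FBT) :
    (attachLeftmost C T).removeRightmostLeaf = attachLeftmost C.removeRightmostLeaf T := by
  cases C with
  | leaf => exact absurd rfl hC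
  | node l r => cases r <;> simp [attachLeftmost, removeRightmostLeaf]

lemma iterate_removeRightmostLeaf_attachLeftmost (C T : FBT) :
    removeRightmostLeaf^[C.internal] (attachLeftmost C T) = T := by
  induction h : C.internal generalizing C with
  | zero => simp [eq_leaf_of_internal_eq_zero h, attachLeftmost]
  | succ N ih =>
    have hC : C ≠ leaf := by rintro rfl; simp [internal] at h
    rw [Function.iterate_succ_apply, removeRightmostLeaf_attachLeftmost hC]
    exact ih _ (by have := internal_removeRightmostLeaf_add_one hC; omega)

namespace Rot

lemma internal_eq_s15 {S S' : FBT} (h : Rot S S') : S.internal = S'.internal := by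
  induction h <;> simp only [internal] at * <;> omega

lemma ne_leaf_s15 {S S' : FBT} (h : Rot S S') : S ≠ leaf ∧ S' ≠ leaf := by
  cases h <;> exact ⟨by simp, by simp⟩

lemma attachLeftmost {T T' : FBT} (C : FBT) (h : Rot T T') :
    Rot (attachLeftmost C T) (attachLeftmost C T') := by
  induction C with
  | leaf => exact h
  | node _ r ihl => exact congrL r ihl

lemma reflGen_removeRightmostLeaf {S S' : FBT} (h : Rot S S') :
    ReflGen Rot S.removeRightmostLeaf S'.removeRightmostLeaf := by
  induction h with
  | rotR C D E =>
    cases E with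
    | leaf => exact .refl
    | node a b => exact .single (rotR C D _)
  | rotL C D E =>
    cases E with
    | leaf => exact .refl
    | node a b => exact .single (rotL C D _)
  | congrL r h =>
    cases r with
    | leaf => exact .single h
    | node a b => exact .single (congrL _ h)
  | congrR l h ih =>
    obtain ⟨hr, hr'⟩ := h.ne_leaf_s15
    rename_i r r'
    cases r with
    | leaf => exact absurd rfl hr
    | node a b =>
      cases r' with
      | leaf => exact absurd rfl hr'
      | node a' b' =>
        simp only [removeRightmostLeaf] at ih ⊢
        rcases (reflGen_iff _ _ _).mp ih with heq | hrot
        · rw [heq]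
        · exact .single (congrR l hrot)

lemma reflGen_iterate_removeRightmostLeaf (N : ℕ) {S S' : FBT} (h : Rot S S') :
    ReflGen Rot (removeRightmostLeaf^[N] S) (removeRightmostLeaf^[N] S') := by
  induction N generalizing S S' with
  | zero => exact .single h
  | succ N ih =>
    simp only [Function.iterate_succ_apply]
    rcases (reflGen_iff _ _ _).mp h.reflGen_removeRightmostLeaf with heq | hrot
    · rw [heq]
    · exact ih hrot

end Rot

namespace RotChainP

lemma map {P Q : FBT → Prop} {f : FBT → FBT} (hf : ∀ {S S'}, Rot S S' → Rot (f S) (f S'))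
    (hPQ : ∀ S, P S → Q (f S)) :
    ∀ {m : ℕ} {S S' : FBT}, RotChainP P m S S' → RotChainP Q m (f S) (f S')
  | 0, _, _, h => congrArg f h
  | _ + 1, _, _, ⟨T, hrot, hT, hchain⟩ => ⟨f T, hf hrot, hPQ T hT, map hf hPQ hchain⟩

lemma exists_rotChain_of_reflGen {P : FBT → Prop} {f : FBT → FBT}
    (hf : ∀ {S S'}, Rot S S' → ReflGen Rot (f S) (f S')) :
    ∀ {m : ℕ} {S S' : FBT}, RotChainP P m S S' → ∃ m' ≤ m, RotChain m' (f S) (f S')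
  | 0, _, _, h => ⟨0, le_rfl, congrArg f h⟩
  | m + 1, _, _, ⟨T, hrot, _, hchain⟩ => by
    obtain ⟨m', hm', hc⟩ := exists_rotChain_of_reflGen hf hchain
    rcases (reflGen_iff _ _ _).mp (hf hrot) with heq | hrot'
    · exact ⟨m', by omega, heq ▸ hc⟩
    · exact ⟨m' + 1, by omega, ⟨f T, hrot', trivial, hc⟩⟩

end RotChainP

lemma RotChain.internal_invariant :
    ∀ {m : ℕ} {T T' : FBT}, RotChain m T T' →
      RotChainP (fun U => U.internal = T.internal) m T T'
  | 0, _, _, h => h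
  | _ + 1, _, _, ⟨U, hrot, _, hchain⟩ =>
    ⟨U, hrot, hrot.internal_eq_s15.symm, hrot.internal_eq_s15 ▸ RotChain.internal_invariant hchain⟩

theorem rotdist_reduces_to_rank_bounded_general (n : ℕ) (T1 T2 : FBT)
    (h1 : T1.internal = n) (h2 : T2.internal = n) :
    (attachLeftmost (completeTree (Nat.clog 2 n + 1)) T1).rank = Nat.clog 2 n + 1 ∧
    (attachLeftmost (completeTree (Nat.clog 2 n + 1)) T2).rank = Nat.clog 2 n + 1 ∧
    ∀ k : ℕ,
      (∃ m ≤ k, RotChain m T1 T2) ↔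
      (∃ m ≤ k, RotChainP
        (fun S => S.rank ≤
          max (attachLeftmost (completeTree (Nat.clog 2 n + 1)) T1).rank
              (attachLeftmost (completeTree (Nat.clog 2 n + 1)) T2).rank)
        m
        (attachLeftmost (completeTree (Nat.clog 2 n + 1)) T1)
        (attachLeftmost (completeTree (Nat.clog 2 n + 1)) T2)) := by
  set C := completeTree (Nat.clog 2 n + 1)
  have hrank : ∀ U : FBT, U.internal = n → (attachLeftmost C U).rank = Nat.clog 2 n + 1 :=
    fun U hU => by
      rw [rank_attachLeftmost_completeTree, max_eq_left]
      exact rank_le_of_internal_le_two_pow (hU ▸ Nat.le_pow_clog one_lt_two n)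
  refine ⟨hrank T1 h1, hrank T2 h2, fun k => ⟨?_, ?_⟩⟩
  · rintro ⟨m, hm, hc⟩
    refine ⟨m, hm, hc.internal_invariant.map (Rot.attachLeftmost C) fun U hU => ?_⟩
    rw [hrank U (hU.trans h1), hrank T1 h1, hrank T2 h2, max_self]
  · rintro ⟨m, hm, hc⟩
    obtain ⟨m', hm', hc'⟩ :=
      hc.exists_rotChain_of_reflGen (Rot.reflGen_iterate_removeRightmostLeaf C.internal)
    rw [iterate_removeRightmostLeaf_attachLeftmost, iterate_removeRightmostLeaf_attachLeftmost]
      at hc'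
    exact ⟨m', hm'.trans hm, hc'⟩

/-- attaching each `T_i` (with `n` internal nodes) at the leftmost leaf
of the complete binary tree of height `r = ⌈log₂ n⌉ + 1` produces trees `T_i'` of rank
exactly `r`, and `d(T1,T2) ≤ k` iff `d_R(T1',T2') ≤ k` for every `k`. -/
theorem rotdist_reduces_to_rank_bounded (n : ℕ) (hn : 1 ≤ n) (T1 T2 : FBT)
    (h1 : T1.internal = n) (h2 : T2.internal = n) :
    (attachLeftmost (completeTree (Nat.clog 2 n + 1)) T1).rank = Nat.clog 2 n + 1 ∧
    (attachLeftmost (completeTree (Nat.clog 2 n + 1)) T2).rank = Nat.clog 2 n + 1 ∧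
    ∀ k : ℕ,
      (∃ m ≤ k, RotChain m T1 T2) ↔
      (∃ m ≤ k, RotChainP
        (fun S => S.rank ≤
          max (attachLeftmost (completeTree (Nat.clog 2 n + 1)) T1).rank
              (attachLeftmost (completeTree (Nat.clog 2 n + 1)) T2).rank)
        m
        (attachLeftmost (completeTree (Nat.clog 2 n + 1)) T1)
        (attachLeftmost (completeTree (Nat.clog 2 n + 1)) T2)) :=
  rotdist_reduces_to_rank_bounded_general n T1 T2 h1 h2
end
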